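/- arXiv:0907.4667 — 7 statements merged into one kernel-verified Lean document; each statement's English description precedes it below -/
import Mathlib

section
/- Let k be a positive integer and let p be a pattern containing exactly k distinct variables. If p has length at least 2^k, then p is 4-avoidable; that is, there exist infinitely many words over a 4-letter alphabet having no factor that is an instance of p. -/
/-- A word `w` is an instance of the pattern `p` if there is a non-erasing
substitution (equivalently, a non-erasing monoid morphism on free monoids)
sending `p` to `w`. -/
def IsInstance {Δ α : Type*} (p : List Δ) (w : List α) : Prop :=
  ∃ f : Δ → List α, (∀ v, f v ≠ []) ∧ (p.map f).flatten = w

/-- A word `w` avoids the pattern `p` if no factor of `w` is an instance of `p`. -/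
def Avoids {Δ α : Type*} (w : List α) (p : List Δ) : Prop :=
  ∀ x : List α, x <:+: w → ¬ IsInstance p x

/-!
If a variable occurs only once in a pattern with `K` variables and at least `2 ^ K` letters, one
side of that occurrence has fewer variables and at least `2 ^ (K - 1)` letters. Hence the pattern
has a factor `q` in which every variable occurs at least twice and `2 ^ K ≤ |q|`. If `K ≤ 2`,
then `q` contains a square, so square-free words avoid it; otherwise `|q| ≥ 2 ^ K ≥ 2 K + 1`.

Words of every length are then produced by Rosenfeld's counting argument. Let `A n` be the number
of good words of length `n`. A bad one-letter extension of a good word ends with an occurrence of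
the forbidden factor, so it is determined by a shorter good prefix and, for a pattern, by the
images of the variables. As long as `A` has grown by a factor `β` at each step, this bounds the
bad extensions by `(4 - β) A n`, so `A (n + 1) ≥ β A n` again. For squares `β = 2` and the bound
is `∑_{j ≤ n} A j ≤ 2 A n`. For `q`, with `β = 3` and `m_v ≥ 2` occurrences of the variable `v`,
it is `3 A n ∏_v ∑_{j ≥ 1} (4 / 3 ^ m_v) ^ j ≤ 3 A n 9 ^ K / 3 ^ |q| ≤ A n`.
-/

open Finset

section Patterns

variable {Δ α : Type*} {p q : List Δ} {w y : List α}

theorem flatten_map_ne_nil {f : Δ → List α} (hf : ∀ v, f v ≠ []) (hp : p ≠ []) :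
    (p.map f).flatten ≠ [] := by
  obtain ⟨v, p, rfl⟩ := List.exists_cons_of_ne_nil hp
  simp [hf]

theorem Avoids.mono (h : Avoids w p) (hy : y <:+: w) : Avoids y p :=
  fun x hx => h x (hx.trans hy)

theorem Avoids.of_isInfix (h : Avoids w q) (hqp : q <:+: p) : Avoids w p := by
  rintro x hx ⟨f, hf, rfl⟩
  exact h _ (((hqp.map f).flatten).trans hx) ⟨f, hf, rfl⟩

theorem avoids_nil (hp : p ≠ []) : Avoids ([] : List α) p := by
  rintro x hx ⟨f, hf, rfl⟩
  exact flatten_map_ne_nil hf hp (List.infix_nil.1 hx)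

def IsSquareFree (w : List α) : Prop :=
  ∀ u : List α, u ≠ [] → ¬ u ++ u <:+: w

theorem IsSquareFree.mono (h : IsSquareFree w) (hy : y <:+: w) : IsSquareFree y :=
  fun u hu huu => h u hu (huu.trans hy)

theorem IsSquareFree.avoids (hw : IsSquareFree w) (hp : ∃ u ≠ [], u ++ u <:+: p) :
    Avoids w p := by
  obtain ⟨u, hu, huu⟩ := hp
  refine Avoids.of_isInfix ?_ huu
  rintro x hx ⟨f, hf, rfl⟩
  exact hw _ (flatten_map_ne_nil hf hu) (by simpa using hx)

theorem exists_prefix_dropLast_of_not_isInfix_dropLast (hy : y <:+: w)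
    (h : ¬ y <:+: w.dropLast) : ∃ x, x <+: w.dropLast ∧ x ++ y = w := by
  obtain ⟨x, z, rfl⟩ := hy
  obtain rfl | ⟨c, z, rfl⟩ := List.eq_nil_or_concat z
  · refine ⟨x, ?_, by simp⟩
    obtain rfl | ⟨y, b, rfl⟩ := List.eq_nil_or_concat y
    · simp at h
    · simp [← List.append_assoc]
  · exact absurd ⟨x, c, by simp [← List.append_assoc]⟩ h

end Patterns

section Counting

variable {α : Type*} [Fintype α] [DecidableEq α]

def wordsOfLength (α : Type*) [Fintype α] [DecidableEq α] (n : ℕ) : Finset (List α) :=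
  univ.image (List.ofFn : (Fin n → α) → List α)

@[simp]
theorem mem_wordsOfLength {n : ℕ} {w : List α} : w ∈ wordsOfLength α n ↔ w.length = n := by
  refine ⟨?_, fun h => ?_⟩
  · simp only [wordsOfLength, mem_image, mem_univ, true_and]
    rintro ⟨f, rfl⟩
    exact List.length_ofFn
  · subst h
    simpa [wordsOfLength] using ⟨w.get, List.ofFn_get w⟩

theorem card_wordsOfLength (n : ℕ) : #(wordsOfLength α n) = Fintype.card α ^ n := by
  rw [wordsOfLength, card_image_of_injective _ List.ofFn_injective, card_univ,
    Fintype.card_fun, Fintype.card_fin]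

variable (P : List α → Prop)

open Classical in
noncomputable def goodWords (n : ℕ) : Finset (List α) :=
  (wordsOfLength α n).filter P

open Classical in
noncomputable def badExtensions (n : ℕ) : Finset (List α) :=
  (wordsOfLength α (n + 1)).filter fun w => P w.dropLast ∧ ¬ P w

variable {P}

@[simp]
theorem mem_goodWords {n : ℕ} {w : List α} : w ∈ goodWords P n ↔ w.length = n ∧ P w := by
  simp [goodWords]

theorem mem_badExtensions {n : ℕ} {w : List α} :
    w ∈ badExtensions P n ↔ w.length = n + 1 ∧ P w.dropLast ∧ ¬ P w := by
  simp [badExtensions]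

theorem card_mul_card_goodWords_le (n : ℕ) :
    Fintype.card α * #(goodWords P n) ≤ #(goodWords P (n + 1)) + #(badExtensions P n) := by
  classical
  calc Fintype.card α * #(goodWords P n) = #(goodWords P n ×ˢ (univ : Finset α)) := by
        rw [card_product, card_univ, mul_comm]
    _ ≤ #(goodWords P (n + 1) ∪ badExtensions P n) := by
        refine card_le_card_of_injOn (fun x => x.1 ++ [x.2]) ?_ ?_
        · rintro ⟨u, a⟩ hu
          simp only [coe_product, Set.mem_prod, mem_coe, mem_goodWords] at hu
          by_cases h : P (u ++ [a]) <;> simp [mem_badExtensions, hu.1, h]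
        · rintro ⟨u, a⟩ - ⟨u', a'⟩ - h
          simpa using h
    _ ≤ _ := card_union_le _ _

theorem pow_sub_mul_le_of_growth {A : ℕ → ℕ} {β n : ℕ} (hA : ∀ j < n, β * A j ≤ A (j + 1))
    {j : ℕ} (hj : j ≤ n) : β ^ (n - j) * A j ≤ A n := by
  induction n, hj using Nat.le_induction with
  | base => simp
  | succ m hjm ih =>
    calc β ^ (m + 1 - j) * A j = β * (β ^ (m - j) * A j) := by
          rw [Nat.sub_add_comm hjm, pow_succ']; ring
      _ ≤ β * A m := Nat.mul_le_mul_left β (ih fun i hi => hA i (by omega))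
      _ ≤ A (m + 1) := hA m (by omega)

theorem sum_range_le_two_mul_of_growth {A : ℕ → ℕ} {n : ℕ}
    (hA : ∀ j < n, 2 * A j ≤ A (j + 1)) : ∑ j ∈ range (n + 1), A j ≤ 2 * A n := by
  induction n with
  | zero => simp; omega
  | succ n ih =>
    have := ih fun j hj => hA j (by omega)
    have := hA n (by omega)
    rw [sum_range_succ]
    omega

theorem exists_length_eq_of_card_badExtensions_le {β : ℕ} (hβ : 0 < β) (hnil : P [])
    (hbad : ∀ n, (∀ j < n, β * #(goodWords P j) ≤ #(goodWords P (j + 1))) →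
      #(badExtensions P n) + β * #(goodWords P n) ≤ Fintype.card α * #(goodWords P n))
    (n : ℕ) : ∃ w : List α, w.length = n ∧ P w := by
  have growth : ∀ n, β * #(goodWords P n) ≤ #(goodWords P (n + 1)) := by
    intro n
    induction n using Nat.strong_induction_on with
    | _ n ih =>
      have := hbad n ih
      have := card_mul_card_goodWords_le (P := P) n
      omega
  suffices 0 < #(goodWords P n) by simpa [Finset.Nonempty] using this
  induction n with
  | zero => exact card_pos.2 ⟨[], by simp [hnil]⟩
  | succ n ih => exact lt_of_lt_of_le (Nat.mul_pos hβ ih) (growth n)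

end Counting

section SquareFree

variable {α : Type*} [Fintype α] [DecidableEq α]

theorem card_badExtensions_isSquareFree_le (n : ℕ) :
    #(badExtensions (IsSquareFree (α := α)) n) ≤
      ∑ j ∈ range (n + 1), #(goodWords (IsSquareFree (α := α)) j) := by
  classical
  calc #(badExtensions IsSquareFree n)
      ≤ #(((range (n + 1)).biUnion (goodWords IsSquareFree)).image
          fun x => x ++ x.drop (2 * x.length - (n + 1))) := by
        refine card_le_card fun w hw => ?_
        obtain ⟨hlen, hsf, hnsf⟩ := mem_badExtensions.1 hw
        obtain ⟨u, hu, huw⟩ : ∃ u : List α, u ≠ [] ∧ u ++ u <:+: w := by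
          simpa [IsSquareFree] using hnsf
        obtain ⟨x, -, rfl⟩ :=
          exists_prefix_dropLast_of_not_isInfix_dropLast huw (fun h => hsf u hu h)
        have hu' : 0 < u.length := List.length_pos_iff.2 hu
        simp only [List.length_append] at hlen
        simp only [mem_image, mem_biUnion, mem_range, mem_goodWords]
        refine ⟨x ++ u, ⟨(x ++ u).length, by simp; omega, rfl, hsf.mono ?_⟩, ?_⟩
        · rw [← List.append_assoc, List.dropLast_append_of_ne_nil hu]
          exact (List.prefix_append _ _).isInfix
        · have : 2 * (x ++ u).length - (n + 1) = x.length := by simp; omega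
          rw [this, List.drop_left, List.append_assoc]
    _ ≤ ∑ j ∈ range (n + 1), #(goodWords IsSquareFree j) :=
        card_image_le.trans card_biUnion_le

theorem exists_isSquareFree_of_four_le_card (hα : 4 ≤ Fintype.card α) (n : ℕ) :
    ∃ w : List α, w.length = n ∧ IsSquareFree w := by
  refine exists_length_eq_of_card_badExtensions_le two_pos ?_ (fun n hgrowth => ?_) n
  · intro u hu huu
    simpa [hu] using List.eq_nil_of_infix_nil huu
  · have := (card_badExtensions_isSquareFree_le n).trans
      (sum_range_le_two_mul_of_growth hgrowth)
    nlinarith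

end SquareFree

section Estimate

theorem sum_Icc_geom_le {m : ℕ} (hm : 2 ≤ m) (N : ℕ) :
    ∑ j ∈ Icc 1 N, ((4 : ℚ) / 3 ^ m) ^ j ≤ 9 / 3 ^ m := by
  have h9 : (9 : ℚ) ≤ 3 ^ m := by
    calc (9 : ℚ) = 3 ^ 2 := by norm_num
      _ ≤ 3 ^ m := pow_le_pow_right₀ (by norm_num) hm
  have hx : (4 : ℚ) / 3 ^ m < 1 := by rw [div_lt_one (by positivity)]; linarith
  calc ∑ j ∈ Icc 1 N, ((4 : ℚ) / 3 ^ m) ^ j ≤ (4 / 3 ^ m) ^ 1 / (1 - 4 / 3 ^ m) := by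
        rw [← Ico_add_one_right_eq_Icc]
        exact geom_sum_Ico_le_of_lt_one (by positivity) hx
    _ ≤ 9 / 3 ^ m := by
        rw [pow_one, div_le_div_iff₀ (by linarith) (by positivity)]
        field_simp
        nlinarith

variable {ι : Type*} [Fintype ι] [DecidableEq ι]

/-- `μ i` is the length of the image of a variable occurring `m i` times, so that
`∑ i, m i * μ i` is the length of the instance. -/
def lengthProfiles (m : ι → ℕ) (N : ℕ) : Finset (ι → ℕ) :=
  (Fintype.piFinset fun _ => Icc 1 N).filter fun μ => ∑ i, m i * μ i ≤ N

variable {m : ι → ℕ}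

theorem sum_piFinset_prod_geom_le (hm : ∀ i, 2 ≤ m i)
    (hsum : 2 * Fintype.card ι + 1 ≤ ∑ i, m i) (N : ℕ) :
    ∑ μ ∈ Fintype.piFinset (fun _ : ι => Icc 1 N), ∏ i, ((4 : ℚ) / 3 ^ m i) ^ μ i ≤ 1 / 3 := by
  rw [← prod_univ_sum]
  calc ∏ i, ∑ j ∈ Icc 1 N, ((4 : ℚ) / 3 ^ m i) ^ j ≤ ∏ i, (9 : ℚ) / 3 ^ m i :=
        prod_le_prod (fun i _ => sum_nonneg fun j _ => by positivity)
          fun i _ => sum_Icc_geom_le (hm i) N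
    _ = 3 ^ (2 * Fintype.card ι) / 3 ^ ∑ i, m i := by
        rw [prod_div_distrib, prod_const, prod_pow_eq_pow_sum, pow_mul, card_univ]
        norm_num
    _ ≤ 1 / 3 := by
        rw [div_le_div_iff₀ (by positivity) (by norm_num), one_mul, ← pow_succ]
        exact pow_le_pow_right₀ (by norm_num) hsum

theorem sum_pow_mul_le_of_growth (hm : ∀ i, 2 ≤ m i)
    (hsum : 2 * Fintype.card ι + 1 ≤ ∑ i, m i) {A : ℕ → ℕ} {n : ℕ}
    (hA : ∀ j < n, 3 * A j ≤ A (j + 1)) :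
    ∑ μ ∈ lengthProfiles m (n + 1), 4 ^ (∑ i, μ i) * A (n + 1 - ∑ i, m i * μ i) ≤ A n := by
  set M := lengthProfiles m (n + 1)
  have hterm : ∀ μ ∈ M, ((4 ^ (∑ i, μ i) * A (n + 1 - ∑ i, m i * μ i) : ℕ) : ℚ) ≤
      3 * A n * ∏ i, ((4 : ℚ) / 3 ^ m i) ^ μ i := by
    intro μ hμ
    simp only [M, lengthProfiles, mem_filter, Fintype.mem_piFinset, mem_Icc] at hμ
    set s := ∑ i, m i * μ i
    have hs : 1 ≤ s :=
      calc 1 ≤ ∑ i, m i := by omega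
        _ ≤ s := sum_le_sum fun i _ => Nat.le_mul_of_pos_right _ (hμ.1 i).1
    have hgrowth : 3 ^ (s - 1) * A (n + 1 - s) ≤ A n := by
      simpa [show n - (n + 1 - s) = s - 1 by omega] using
        pow_sub_mul_le_of_growth hA (j := n + 1 - s) (by omega)
    have hprod : ∏ i, ((4 : ℚ) / 3 ^ m i) ^ μ i = 4 ^ (∑ i, μ i) / (3 * 3 ^ (s - 1)) := by
      rw [← pow_succ', Nat.sub_add_cancel hs]
      simp_rw [div_pow, ← pow_mul]
      rw [prod_div_distrib, prod_pow_eq_pow_sum, prod_pow_eq_pow_sum]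
    rw [hprod, mul_div_assoc', le_div_iff₀ (by positivity)]
    have : (3 : ℚ) ^ (s - 1) * A (n + 1 - s) ≤ A n := by exact_mod_cast hgrowth
    push_cast
    nlinarith [pow_nonneg (show (0 : ℚ) ≤ 4 by norm_num) (∑ i, μ i)]
  have hsum_le : ∑ μ ∈ M, ∏ i, ((4 : ℚ) / 3 ^ m i) ^ μ i ≤ 1 / 3 :=
    (sum_le_sum_of_subset_of_nonneg (filter_subset _ _) fun _ _ _ => by positivity).trans
      (sum_piFinset_prod_geom_le hm hsum _)
  have : ((∑ μ ∈ M, 4 ^ (∑ i, μ i) * A (n + 1 - ∑ i, m i * μ i) : ℕ) : ℚ) ≤ A n :=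
    calc ((∑ μ ∈ M, 4 ^ (∑ i, μ i) * A (n + 1 - ∑ i, m i * μ i) : ℕ) : ℚ)
        ≤ ∑ μ ∈ M, 3 * A n * ∏ i, ((4 : ℚ) / 3 ^ m i) ^ μ i := by
          rw [Nat.cast_sum]; exact sum_le_sum hterm
      _ ≤ 3 * A n * (1 / 3) := by rw [← mul_sum]; gcongr
      _ = A n := by ring
  exact_mod_cast this

end Estimate

section Instances

variable {Δ α : Type*} [DecidableEq Δ] (q : List Δ)

theorem length_flatten_map (f : Δ → List α) :
    ((q.map f).flatten).length = ∑ v : q.toFinset, q.count (v : Δ) * (f v).length := by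
  rw [List.length_flatten, List.map_map, sum_list_map_count, ← sum_coe_sort]
  rfl

variable [Fintype α] [DecidableEq α]

theorem card_badExtensions_avoids_le (n : ℕ) :
    #(badExtensions (Avoids (α := α) · q) n) ≤
      ∑ μ ∈ lengthProfiles (fun v : q.toFinset => q.count (v : Δ)) (n + 1),
        Fintype.card α ^ (∑ v, μ v) *
          #(goodWords (Avoids (α := α) · q) (n + 1 - ∑ v : q.toFinset, q.count (v : Δ) * μ v)) := by
  classical
  set M := lengthProfiles (fun v : q.toFinset => q.count (v : Δ)) (n + 1)
  let substitute : (q.toFinset → List α) × List α → List α := fun ⟨φ, x⟩ =>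
    x ++ (q.map fun v => if h : v ∈ q.toFinset then φ ⟨v, h⟩ else []).flatten
  calc #(badExtensions (Avoids (α := α) · q) n)
      ≤ #((M.biUnion fun μ => Fintype.piFinset (fun v => wordsOfLength α (μ v)) ×ˢ
          goodWords (Avoids · q) (n + 1 - ∑ v : q.toFinset, q.count (v : Δ) * μ v)).image
            substitute) := by
        refine card_le_card fun w hw => ?_
        obtain ⟨hlen, hdrop, hw⟩ := mem_badExtensions.1 hw
        obtain ⟨y, hyw, f, hf, rfl⟩ : ∃ y, y <:+: w ∧ IsInstance q y := by
          simpa [Avoids] using hw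
        obtain ⟨x, hx, rfl⟩ := exists_prefix_dropLast_of_not_isInfix_dropLast hyw
          fun h => hdrop _ h ⟨f, hf, rfl⟩
        rw [List.length_append, length_flatten_map] at hlen
        simp only [mem_image, mem_biUnion, mem_product, Fintype.mem_piFinset, mem_wordsOfLength,
          mem_goodWords, Prod.exists]
        refine ⟨fun v => f v, x, ⟨fun v => (f v).length, ?_, fun v => rfl,
          by beta_reduce; omega, hdrop.mono hx.isInfix⟩, ?_⟩
        · simp only [M, lengthProfiles, mem_filter, Fintype.mem_piFinset, mem_Icc]
          refine ⟨fun v => ⟨List.length_pos_iff.2 (hf v), ?_⟩, by omega⟩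
          calc (f v).length ≤ q.count (v : Δ) * (f v).length :=
                Nat.le_mul_of_pos_left _ (List.count_pos_iff.2 (List.mem_toFinset.1 v.2))
            _ ≤ ∑ v : q.toFinset, q.count (v : Δ) * (f v).length :=
                single_le_sum (f := fun v : q.toFinset => q.count (v : Δ) * (f v).length)
                  (fun _ _ => Nat.zero_le _) (mem_univ v)
            _ ≤ n + 1 := by omega
        · simp only [substitute]
          congr 2
          exact List.map_congr_left fun v hv => dif_pos (List.mem_toFinset.2 hv)
    _ ≤ _ := by
        refine card_image_le.trans (card_biUnion_le.trans (sum_le_sum fun μ _ => ?_))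
        rw [card_product, Fintype.card_piFinset]
        simp only [card_wordsOfLength, prod_pow_eq_pow_sum, le_refl]

end Instances

theorem exists_avoids_fin_four_of_two_le_count {Δ : Type*} [DecidableEq Δ] {q : List Δ}
    (hcount : ∀ v ∈ q, 2 ≤ q.count v) (hlen : 2 * q.toFinset.card + 1 ≤ q.length) (n : ℕ) :
    ∃ w : List (Fin 4), w.length = n ∧ Avoids w q := by
  have hq : q ≠ [] := by rintro rfl; simp at hlen
  refine exists_length_eq_of_card_badExtensions_le three_pos (avoids_nil (p := q) hq)
    (fun n hgrowth => ?_) n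
  have hm : ∀ v : q.toFinset, 2 ≤ q.count (v : Δ) := fun v =>
    hcount v (List.mem_toFinset.1 v.2)
  have hsum : 2 * Fintype.card q.toFinset + 1 ≤ ∑ v : q.toFinset, q.count (v : Δ) := by
    rwa [Fintype.card_coe, sum_coe_sort q.toFinset (q.count ·),
      List.sum_toFinset_count_eq_length]
  have hbad := card_badExtensions_avoids_le (α := Fin 4) q n
  have hest := sum_pow_mul_le_of_growth hm hsum hgrowth
  rw [Fintype.card_fin] at hbad ⊢
  linarith [hbad.trans hest]

theorem exists_infix_forall_two_le_count {Δ : Type*} [DecidableEq Δ] {p : List Δ}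
    (hp : 2 ^ p.toFinset.card ≤ p.length) :
    ∃ q, q <:+: p ∧ (∀ v ∈ q, 2 ≤ q.count v) ∧ 2 ^ q.toFinset.card ≤ q.length := by
  induction hn : p.length using Nat.strong_induction_on generalizing p with
  | _ n ih =>
  subst hn
  by_cases hcount : ∀ v ∈ p, 2 ≤ p.count v
  · exact ⟨p, List.infix_refl p, hcount, hp⟩
  obtain ⟨v, hv, hv1⟩ := by simpa only [not_forall, not_le] using hcount
  obtain ⟨a, b, rfl⟩ := List.append_of_mem hv
  simp only [List.count_append, List.count_cons_self] at hv1
  set K := (a ++ v :: b).toFinset.card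
  have recurse : ∀ s, s <:+: a ++ v :: b → v ∉ s → s.length < (a ++ v :: b).length →
      2 ^ (K - 1) ≤ s.length →
      ∃ q, q <:+: a ++ v :: b ∧ (∀ v ∈ q, 2 ≤ q.count v) ∧ 2 ^ q.toFinset.card ≤ q.length := by
    intro s hs hvs hlt hlen
    have hK : s.toFinset.card < K :=
      card_lt_card <| (ssubset_iff_of_subset fun x hx =>
        List.mem_toFinset.2 (hs.subset (List.mem_toFinset.1 hx))).2 ⟨v, by simp, by simpa⟩
    obtain ⟨q, hqs, hq⟩ := ih _ hlt ((Nat.pow_le_pow_right two_pos (by omega)).trans hlen) rfl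
    exact ⟨q, hqs.trans hs, hq⟩
  have hsplit : 2 ^ (K - 1) ≤ a.length ∨ 2 ^ (K - 1) ≤ b.length := by
    have hK : 0 < K := card_pos.2 ⟨v, by simp⟩
    have : 2 ^ K = 2 * 2 ^ (K - 1) := by rw [← pow_succ', Nat.sub_add_cancel hK]
    simp only [List.length_append, List.length_cons] at hp
    omega
  rcases hsplit with ha | hb
  · exact recurse a (List.prefix_append _ _).isInfix (List.count_eq_zero.1 (by omega))
      (by simp) ha
  · exact recurse b ⟨a ++ [v], [], by simp⟩ (List.count_eq_zero.1 (by omega))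
      (by simp; omega) hb

theorem exists_square_infix_of_card_toFinset_le_two {Δ : Type*} [DecidableEq Δ] {q : List Δ}
    (hcard : q.toFinset.card ≤ 2) (hlen : 2 ^ q.toFinset.card ≤ q.length) :
    ∃ u ≠ [], u ++ u <:+: q := by
  obtain _ | ⟨a, _ | ⟨b, r⟩⟩ := q
  · simp at hlen
  · simp at hlen
  by_cases hab : a = b
  · exact ⟨[a], by simp, [], r, by simp [hab]⟩
  have hpair : ({a, b} : Finset Δ) = (a :: b :: r).toFinset :=
    eq_of_subset_of_card_le (by simp [insert_subset_iff]) (by rwa [card_pair hab])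
  have hr : ∀ x ∈ r, x = a ∨ x = b := fun x hx => by
    have : x ∈ ({a, b} : Finset Δ) := hpair ▸ List.mem_toFinset.2 (by simp [hx])
    simpa using this
  rw [← hpair, card_pair hab] at hlen
  obtain _ | ⟨c, _ | ⟨d, r⟩⟩ := r
  · simp at hlen
  · simp at hlen
  by_cases hbc : b = c
  · exact ⟨[b], by simp, [a], d :: r, by simp [hbc]⟩
  by_cases hcd : c = d
  · exact ⟨[c], by simp, [a, b], r, by simp [hcd]⟩
  have hca : c = a := (hr c (by simp)).resolve_right (Ne.symm hbc)
  have hdb : d = b := (hr d (by simp)).resolve_left (hca ▸ Ne.symm hcd)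
  exact ⟨[a, b], by simp, [], r, by simp [hca, hdb]⟩

theorem infinite_setOf_of_forall_exists_length_eq {α : Type*} {P : List α → Prop}
    (h : ∀ n, ∃ w, w.length = n ∧ P w) : {w | P w}.Infinite :=
  Set.Infinite.of_image List.length <| Set.infinite_univ.mono fun n _ =>
    let ⟨w, hw, hP⟩ := h n; ⟨w, hP, hw⟩

theorem two_mul_add_one_le_two_pow {K : ℕ} (hK : 3 ≤ K) : 2 * K + 1 ≤ 2 ^ K := by
  induction K, hK using Nat.le_induction with
  | base => norm_num
  | succ K hK ih =>
    have : 2 ≤ 2 ^ K := Nat.le_self_pow (by omega) 2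
    rw [pow_succ]
    omega

theorem avoid_four_of_length_ge_pow_general {Δ : Type*} [DecidableEq Δ]
    (k : ℕ) (p : List Δ)
    (hvars : p.toFinset.card = k) (hlen : 2 ^ k ≤ p.length) :
    {w : List (Fin 4) | Avoids w p}.Infinite := by
  subst hvars
  obtain ⟨q, hqp, hcount, hq⟩ := exists_infix_forall_two_le_count hlen
  refine infinite_setOf_of_forall_exists_length_eq fun n => ?_
  obtain ⟨w, hw, hwq⟩ : ∃ w : List (Fin 4), w.length = n ∧ Avoids w q := by
    rcases le_or_gt q.toFinset.card 2 with hcard | hcard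
    · obtain ⟨w, hw, hsf⟩ := exists_isSquareFree_of_four_le_card (α := Fin 4) le_rfl n
      exact ⟨w, hw, hsf.avoids (exists_square_infix_of_card_toFinset_le_two hcard hq)⟩
    · exact exists_avoids_fin_four_of_two_le_count hcount
        ((two_mul_add_one_le_two_pow hcard).trans hq) n
  exact ⟨w, hw, hwq.of_isInfix hqp⟩

theorem avoid_four_of_length_ge_pow {Δ : Type*} [DecidableEq Δ]
    (k : ℕ) (hk : 0 < k) (p : List Δ) (hp : p ≠ [])
    (hvars : p.toFinset.card = k) (hlen : 2 ^ k ≤ p.length) :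
    {w : List (Fin 4) | Avoids w p}.Infinite :=
  avoid_four_of_length_ge_pow_general k p hvars hlen
end

section
/- (Golod) Let m ≥ 1 and let S be a set of words over an m-letter alphabet Σ, each word of S having length at least 2. Suppose (c_i)_{i ≥ 2} are natural numbers such that for each i ≥ 2, S contains at most c_i words of length i. Let G(x) = Σ_{n ≥ 0} b_n x^n be the formal power series inverse of 1 − m x + Σ_{i ≥ 2} c_i x^i (over the rationals). If b_n ≥ 0 for all n ≥ 0, then for every n ≥ 0 the number of words of length n over Σ having no factor in S is at least b_n. -/
/-!
Let `a n` count the words of length `n` avoiding `S`. Appending a letter to such a word gives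
either a word of length `n + 1` avoiding `S`, or a word `p ++ x` with `x ∈ S` of some length
`i ≥ 2` and `p` avoiding `S`; hence `m a_n ≤ a_{n+1} + ∑_{i ≥ 2} c_i a_{n+1-i}`. So
`E = A · (1 - m x + ∑ c_i x^i)` has non-negative coefficients and `E_0 = 1`, and from `A = E · G`
we get `a_n = ∑_k E_k b_{n-k} ≥ b_n`.
-/

open Finset PowerSeries

lemma coeff_le_coeff_of_mul_eq_one {R : Type*} [CommSemiring R] [PartialOrder R]
    [IsOrderedRing R] {A P G : R⟦X⟧} (hGP : G * P = 1) (hG : ∀ n, 0 ≤ coeff n G)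
    (hAP : ∀ n, 0 ≤ coeff n (A * P)) (hAP₀ : 1 ≤ coeff 0 (A * P)) (n : ℕ) :
    coeff n G ≤ coeff n A := by
  have hA : A = A * P * G := by rw [mul_assoc, mul_comm P, hGP, mul_one]
  calc coeff n G ≤ coeff 0 (A * P) * coeff n G := le_mul_of_one_le_left (hG n) hAP₀
    _ ≤ ∑ p ∈ antidiagonal n, coeff p.1 (A * P) * coeff p.2 G :=
      single_le_sum (f := fun p : ℕ × ℕ => coeff p.1 (A * P) * coeff p.2 G) (a := (0, n))
        (fun p _ => mul_nonneg (hAP p.1) (hG p.2)) (by simp)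
    _ = coeff n A := by rw [← coeff_mul, ← hA]

def golodSeries (m : ℕ) (c : ℕ → ℕ) : PowerSeries ℚ :=
  mk fun i => if i = 0 then 1 else if i = 1 then -(m : ℚ) else (c i : ℚ)

lemma coeff_zero_mul_golodSeries (m : ℕ) (c : ℕ → ℕ) (a : ℕ → ℚ) :
    coeff 0 (mk a * golodSeries m c) = a 0 := by
  simp [golodSeries]

lemma coeff_succ_mul_golodSeries (m : ℕ) (c : ℕ → ℕ) (a : ℕ → ℚ) (n : ℕ) :
    coeff (n + 1) (mk a * golodSeries m c) =
      a (n + 1) - m * a n + ∑ i ∈ Icc 2 (n + 1), c i * a (n + 1 - i) := by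
  rw [mul_comm, coeff_mul, Nat.sum_antidiagonal_eq_sum_range_succ_mk, range_eq_Ico,
    ← sum_Ico_consecutive _ (show 0 ≤ 2 by omega) (show 2 ≤ n + 1 + 1 by omega),
    ← range_eq_Ico, Ico_add_one_right_eq_Icc]
  congr 1
  · simp [golodSeries, sum_range_succ, sub_eq_add_neg]
  · refine sum_congr rfl fun i hi => ?_
    have : 2 ≤ i := (mem_Icc.mp hi).1
    simp only [golodSeries, coeff_mk, if_neg (show i ≠ 0 by omega), if_neg (show i ≠ 1 by omega)]

section Avoiders

variable {α : Type*}

def avoiders (S : Set (List α)) (n : ℕ) : Set (List α) :=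
  {w | w.length = n ∧ ∀ x, x <:+: w → x ∉ S}

lemma avoiders_finite [Finite α] (S : Set (List α)) (n : ℕ) : (avoiders S n).Finite :=
  (List.finite_length_eq α n).subset fun _ hw => hw.1

lemma avoiders_zero {S : Set (List α)} (hS : [] ∉ S) : avoiders S 0 = {[]} := by
  ext w
  constructor
  · rintro ⟨hw, -⟩
    exact List.length_eq_zero_iff.mp hw
  · rintro rfl
    refine ⟨rfl, fun x hx => ?_⟩
    rwa [List.infix_nil.mp hx]

lemma concat_mem_avoiders_or {S : Set (List α)} {n : ℕ} {u : List α}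
    (hu : u ∈ avoiders S n) (a : α) :
    u ++ [a] ∈ avoiders S (n + 1) ∨
      ∃ x ∈ S, x.length ≤ n + 1 ∧ ∃ p ∈ avoiders S (n + 1 - x.length), p ++ x = u ++ [a] := by
  have hun : u.length = n := hu.1
  have hlen : (u ++ [a]).length = n + 1 := by simp [hun]
  by_cases hav : ∀ x, x <:+: u ++ [a] → x ∉ S
  · exact Or.inl ⟨hlen, hav⟩
  obtain ⟨x, ⟨p, q, hpq⟩, hxS⟩ : ∃ x, x <:+: u ++ [a] ∧ x ∈ S := by simpa using hav
  have hx : x ≠ [] := by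
    rintro rfl
    exact hu.2 [] List.nil_infix hxS
  -- `u` avoids `S`, so the occurrence of `x` must use the appended letter: `q = []`.
  rcases q.eq_nil_or_concat with rfl | ⟨q', b, rfl⟩
  · rw [List.append_nil] at hpq
    have hpx : p.length + x.length = n + 1 := by simpa [hlen] using congrArg List.length hpq
    have hpu : p <+: u :=
      List.prefix_of_prefix_length_le ⟨x, hpq⟩ (List.prefix_append u [a])
        (by have := List.length_pos_of_ne_nil hx; omega)
    refine Or.inr ⟨x, hxS, by omega, p, ⟨by omega, fun y hy => hu.2 y (hy.trans hpu.isInfix)⟩, hpq⟩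
  · have hpq' : (p ++ x ++ q') ++ [b] = u ++ [a] := by simpa [List.append_assoc] using hpq
    exact absurd hxS (hu.2 x ⟨p, q', (List.append_inj' hpq' rfl).1⟩)

lemma card_mul_ncard_avoiders_le [Finite α] {S : Set (List α)} (hS : ∀ w ∈ S, 2 ≤ w.length)
    (n : ℕ) :
    Nat.card α * (avoiders S n).ncard ≤ (avoiders S (n + 1)).ncard +
      ∑ i ∈ Icc 2 (n + 1), {w ∈ S | w.length = i}.ncard * (avoiders S (n + 1 - i)).ncard := by
  set extensions := (fun p : List α × α => p.1 ++ [p.2]) '' (avoiders S n ×ˢ Set.univ)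
  set ending : ℕ → Set (List α) := fun i =>
    (fun p : List α × List α => p.1 ++ p.2) '' (avoiders S (n + 1 - i) ×ˢ {w ∈ S | w.length = i})
  have hslice_finite (i : ℕ) : {w ∈ S | w.length = i}.Finite :=
    (List.finite_length_eq α i).subset fun _ hw => hw.2
  have hcard : Nat.card α * (avoiders S n).ncard = extensions.ncard := by
    rw [Set.InjOn.ncard_image, Set.ncard_prod, Set.ncard_univ, mul_comm]
    rintro ⟨u, a⟩ ⟨hu, -⟩ ⟨v, b⟩ ⟨hv, -⟩ h
    obtain ⟨huv, hab⟩ := List.append_inj h (hu.1.trans hv.1.symm)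
    exact Prod.ext huv (List.cons.inj hab).1
  have hsub : extensions ⊆ avoiders S (n + 1) ∪ ⋃ i ∈ Icc 2 (n + 1), ending i := by
    rintro _ ⟨⟨u, a⟩, ⟨hu, -⟩, rfl⟩
    rcases concat_mem_avoiders_or hu a with h | ⟨x, hxS, hxn, p, hp, hpx⟩
    · exact Or.inl h
    · exact Or.inr <| Set.mem_biUnion (mem_Icc.mpr ⟨hS x hxS, hxn⟩)
        ⟨(p, x), ⟨hp, hxS, rfl⟩, hpx⟩
  have hfin : (avoiders S (n + 1) ∪ ⋃ i ∈ Icc 2 (n + 1), ending i).Finite :=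
    (avoiders_finite S _).union <| (Icc 2 (n + 1)).finite_toSet.biUnion fun i _ =>
      ((avoiders_finite S _).prod (hslice_finite i)).image _
  calc Nat.card α * (avoiders S n).ncard = extensions.ncard := hcard
    _ ≤ (avoiders S (n + 1) ∪ ⋃ i ∈ Icc 2 (n + 1), ending i).ncard := Set.ncard_le_ncard hsub hfin
    _ ≤ (avoiders S (n + 1)).ncard + ∑ i ∈ Icc 2 (n + 1), (ending i).ncard :=
      (Set.ncard_union_le _ _).trans (add_le_add_right (set_ncard_biUnion_le _ _) _)
    _ ≤ _ := by
      gcongr with i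
      calc (ending i).ncard ≤ (avoiders S (n + 1 - i) ×ˢ {w ∈ S | w.length = i}).ncard :=
            Set.ncard_image_le ((avoiders_finite S _).prod (hslice_finite i))
        _ = _ := by rw [Set.ncard_prod, mul_comm]

lemma coeff_avoiders_mul_golodSeries_nonneg [Finite α] {S : Set (List α)}
    (hS : ∀ w ∈ S, 2 ≤ w.length) {c : ℕ → ℕ}
    (hc : ∀ i, 2 ≤ i → {w ∈ S | w.length = i}.ncard ≤ c i) (k : ℕ) :
    0 ≤ coeff k (mk (fun n => ((avoiders S n).ncard : ℚ)) * golodSeries (Nat.card α) c) := by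
  cases k with
  | zero => rw [coeff_zero_mul_golodSeries]; positivity
  | succ n =>
    have hslice : ∑ i ∈ Icc 2 (n + 1), {w ∈ S | w.length = i}.ncard * (avoiders S (n + 1 - i)).ncard
        ≤ ∑ i ∈ Icc 2 (n + 1), c i * (avoiders S (n + 1 - i)).ncard :=
      sum_le_sum fun i hi => Nat.mul_le_mul_right _ (hc i (mem_Icc.mp hi).1)
    have hcount : (Nat.card α * (avoiders S n).ncard : ℚ) ≤ (avoiders S (n + 1)).ncard +
        ∑ i ∈ Icc 2 (n + 1), (c i * (avoiders S (n + 1 - i)).ncard : ℚ) := by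
      exact_mod_cast (card_mul_ncard_avoiders_le hS n).trans (add_le_add_right hslice _)
    rw [coeff_succ_mul_golodSeries]
    linarith

end Avoiders

theorem golod_general (m : ℕ) (S : Set (List (Fin m)))
    (hS : ∀ w ∈ S, 2 ≤ w.length) (c : ℕ → ℕ)
    (hc : ∀ i, 2 ≤ i → ({w ∈ S | w.length = i}).ncard ≤ c i)
    (b : ℕ → ℚ)
    (hinv : PowerSeries.mk b *
      PowerSeries.mk (fun i => if i = 0 then 1 else if i = 1 then -(m : ℚ) else (c i : ℚ))
        = 1)
    (hb : ∀ n, 0 ≤ b n) :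
    ∀ n : ℕ,
      b n ≤ ({w : List (Fin m) | w.length = n ∧ ∀ x, x <:+: w → x ∉ S}).ncard := by
  intro n
  have hnil : [] ∉ S := fun h => by simpa using hS [] h
  have hnonneg := coeff_avoiders_mul_golodSeries_nonneg hS hc
  rw [Nat.card_fin] at hnonneg
  have hconst : 1 ≤ coeff 0 (mk (fun n => ((avoiders S n).ncard : ℚ)) * golodSeries m c) := by
    rw [coeff_zero_mul_golodSeries, avoiders_zero hnil, Set.ncard_singleton, Nat.cast_one]
  simpa [avoiders] using
    coeff_le_coeff_of_mul_eq_one hinv (by simpa using hb) hnonneg hconst n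

/-- Golod's theorem, stated combinatorially: if the formal power series inverse
of `1 - m·x + ∑_{i ≥ 2} c_i x^i` has non-negative coefficients `b n`, then there
are at least `b n` words of length `n` over an `m`-letter alphabet avoiding `S`. -/
theorem golod (m : ℕ) (hm : 1 ≤ m) (S : Set (List (Fin m)))
    (hS : ∀ w ∈ S, 2 ≤ w.length) (c : ℕ → ℕ)
    (hc : ∀ i, 2 ≤ i → ({w ∈ S | w.length = i}).ncard ≤ c i)
    (b : ℕ → ℚ)
    (hinv : PowerSeries.mk b *
      PowerSeries.mk (fun i => if i = 0 then 1 else if i = 1 then -(m : ℚ) else (c i : ℚ))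
        = 1)
    (hb : ∀ n, 0 ≤ b n) :
    ∀ n : ℕ,
      b n ≤ ({w : List (Fin m) | w.length = n ∧ ∀ x, x <:+: w → x ∉ S}).ncard :=
  golod_general m S hS c hc b hinv hb
end

section
/- Let m ≥ 1, let S be a set of words over an m-letter alphabet Σ, each word of S having length at least 2, and suppose that for each i ≥ 2 the set S contains at most c_i words of length i, where c_i are natural numbers. For n ≥ 0, let a_n denote the number of words of length n over Σ having no factor in S. Then for every k ≥ 1, the inequality a_k − m·a_{k−1} + Σ_{2 ≤ j ≤ k} c_j·a_{k−j} ≥ 0 holds. -/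
private lemma ncard_prod_aux {α β : Type*} (s : Set α) (t : Set β) :
    (s ×ˢ t).ncard = s.ncard * t.ncard := by
  rw [← Nat.card_coe_set_eq, ← Nat.card_coe_set_eq, ← Nat.card_coe_set_eq, ← Nat.card_prod]
  exact Nat.card_congr (Equiv.Set.prod s t)

private lemma ncard_biUnion_le_aux {α : Type*} (t : Finset ℕ) (C : ℕ → Set α) :
    (⋃ j ∈ t, C j).ncard ≤ ∑ j ∈ t, (C j).ncard := by
  classical
  induction t using Finset.induction with
  | empty => simp
  | @insert x s hx ih =>
    rw [Finset.set_biUnion_insert, Finset.sum_insert hx]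
    exact (Set.ncard_union_le _ _).trans (Nat.add_le_add_left ih _)

/-- The key counting inequality: if `a n` counts the words of length `n` over an
`m`-letter alphabet with no factor in `S`, then
`a k - m·a (k-1) + ∑_{2 ≤ j ≤ k} c j · a (k-j) ≥ 0` for all `k ≥ 1`. -/
theorem counting_inequality (m : ℕ) (hm : 1 ≤ m) (S : Set (List (Fin m)))
    (hS : ∀ w ∈ S, 2 ≤ w.length) (c : ℕ → ℕ)
    (hc : ∀ i, 2 ≤ i → ({w ∈ S | w.length = i}).ncard ≤ c i)
    (a : ℕ → ℕ)
    (ha : ∀ n, a n = ({w : List (Fin m) | w.length = n ∧ ∀ x, x <:+: w → x ∉ S}).ncard)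
    (k : ℕ) (hk : 1 ≤ k) :
    (0 : ℤ) ≤ (a k : ℤ) - m * a (k - 1) + ∑ j ∈ Finset.Icc 2 k, (c j : ℤ) * a (k - j) := by
  classical
  set A : ℕ → Set (List (Fin m)) :=
    fun n => {w : List (Fin m) | w.length = n ∧ ∀ x, x <:+: w → x ∉ S} with hA
  have finA : ∀ n, (A n).Finite := fun n =>
    (List.finite_length_eq (Fin m) n).subset fun w hw => hw.1
  have finSj : ∀ j, ({w ∈ S | w.length = j}).Finite := fun j =>
    (List.finite_length_eq (Fin m) j).subset fun w hw => hw.2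
  -- the set of words obtained from an avoiding word of length k-1 by appending a letter
  set B : Set (List (Fin m)) :=
    (fun p : Fin m × List (Fin m) => p.2 ++ [p.1]) '' (Set.univ ×ˢ A (k - 1)) with hB
  -- the set of words of the form (avoiding word of length k-j) ++ (word of S of length j)
  set C : ℕ → Set (List (Fin m)) :=
    fun j => (fun p : List (Fin m) × List (Fin m) => p.2 ++ p.1) ''
      (({w ∈ S | w.length = j}) ×ˢ A (k - j)) with hC
  have hBcard : B.ncard = m * a (k - 1) := by
    have inj : Function.Injective (fun p : Fin m × List (Fin m) => p.2 ++ [p.1]) := by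
      rintro ⟨x, v⟩ ⟨y, w⟩ h
      simp only at h
      obtain ⟨h1, h2⟩ := List.append_inj' h rfl
      simp only [List.cons.injEq] at h2
      simp [h1, h2.1]
    rw [hB, Set.ncard_image_of_injective _ inj, ncard_prod_aux, Set.ncard_univ,
      Nat.card_eq_fintype_card, Fintype.card_fin, ha]
  have hCcard : ∀ j ∈ Finset.Icc 2 k, (C j).ncard ≤ c j * a (k - j) := by
    intro j hj
    rw [Finset.mem_Icc] at hj
    have hfin : (({w ∈ S | w.length = j}) ×ˢ A (k - j)).Finite := (finSj j).prod (finA _)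
    calc (C j).ncard ≤ (({w ∈ S | w.length = j}) ×ˢ A (k - j)).ncard :=
          Set.ncard_image_le hfin
      _ = ({w ∈ S | w.length = j}).ncard * (A (k - j)).ncard := ncard_prod_aux _ _
      _ ≤ c j * a (k - j) := by
          rw [ha]
          exact Nat.mul_le_mul_right _ (hc j hj.1)
  -- B is covered by A k together with the C j
  have hsub : B ⊆ A k ∪ ⋃ j ∈ Finset.Icc 2 k, C j := by
    rintro _ ⟨⟨x, v⟩, ⟨-, hv⟩, rfl⟩
    simp only at *
    obtain ⟨hvlen, hvav⟩ := hv
    have hwlen : (v ++ [x]).length = k := by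
      simp [hvlen]; omega
    by_cases hw : ∀ y, y <:+: v ++ [x] → y ∉ S
    · exact Or.inl ⟨hwlen, hw⟩
    · push_neg at hw
      obtain ⟨y, hyinf, hyS⟩ := hw
      obtain ⟨p, q, hpq⟩ := hyinf
      -- q must be empty, else y would be a factor of v
      have hq : q = [] := by
        by_contra hq
        obtain ⟨q', x', rfl⟩ := q.eq_nil_or_concat'.resolve_left hq
        have : p ++ y ++ (q' ++ [x']) = v ++ [x] := hpq
        rw [show p ++ y ++ (q' ++ [x']) = (p ++ y ++ q') ++ [x'] by simp] at this
        obtain ⟨h1, -⟩ := List.append_inj' this rfl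
        exact hvav y ⟨p, q', h1⟩ hyS
      subst hq
      simp only [List.append_nil] at hpq
      set j := y.length with hj
      have hj2 : 2 ≤ j := hS y hyS
      have hjk : j ≤ k := by
        have := congrArg List.length hpq
        simp [hwlen] at this ⊢
        omega
      have hplen : p.length = k - j := by
        have := congrArg List.length hpq
        rw [hwlen] at this
        simp at this
        omega
      -- p is a prefix of v, hence avoids S
      have hpv : p <+: v := by
        have hp1 : p <+: v ++ [x] := ⟨y, hpq⟩
        have hp2 : v <+: v ++ [x] := ⟨[x], rfl⟩
        exact List.prefix_of_prefix_length_le hp1 hp2 (by rw [hplen, hvlen]; omega)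
      have hpA : p ∈ A (k - j) := ⟨hplen, fun z hz => hvav z (hz.trans hpv.isInfix)⟩
      refine Or.inr (Set.mem_biUnion (Finset.mem_Icc.mpr ⟨hj2, hjk⟩) ?_)
      exact ⟨(y, p), ⟨⟨hyS, rfl⟩, hpA⟩, hpq⟩
  have finU : (A k ∪ ⋃ j ∈ Finset.Icc 2 k, C j).Finite := by
    refine (finA k).union ((Finset.Icc 2 k).finite_toSet.biUnion fun j _ => ?_)
    exact (((finSj j).prod (finA _)).image _)
  have key : m * a (k - 1) ≤ a k + ∑ j ∈ Finset.Icc 2 k, c j * a (k - j) := by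
    calc m * a (k - 1) = B.ncard := hBcard.symm
      _ ≤ (A k ∪ ⋃ j ∈ Finset.Icc 2 k, C j).ncard := Set.ncard_le_ncard hsub finU
      _ ≤ (A k).ncard + (⋃ j ∈ Finset.Icc 2 k, C j).ncard := Set.ncard_union_le _ _
      _ ≤ a k + ∑ j ∈ Finset.Icc 2 k, (C j).ncard := by
          rw [ha]
          exact Nat.add_le_add_left (ncard_biUnion_le_aux _ _) _
      _ ≤ a k + ∑ j ∈ Finset.Icc 2 k, c j * a (k - j) :=
          Nat.add_le_add_left (Finset.sum_le_sum hCcard) _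
  have key' : ((m * a (k - 1) : ℕ) : ℤ) ≤
      ((a k + ∑ j ∈ Finset.Icc 2 k, c j * a (k - j) : ℕ) : ℤ) := by exact_mod_cast key
  push_cast at key'
  linarith
end

section
/- Let k ≥ 1 and m ≥ 2 be integers. If w is a word of length at least m^k over a k-letter alphabet, then w contains a non-empty factor w' such that, for every letter a of the alphabet, the number of occurrences of a in w' is a multiple of m. -/
/-- Any word of length at least `m^k` over a `k`-letter alphabet contains a
non-empty factor in which every letter occurs a multiple of `m` times. -/
theorem exists_factor_counts_multiple (k m : ℕ) (hk : 1 ≤ k) (hm : 2 ≤ m)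
    (w : List (Fin k)) (hw : m ^ k ≤ w.length) :
    ∃ w' : List (Fin k), w' ≠ [] ∧ w' <:+: w ∧ ∀ a : Fin k, m ∣ w'.count a := by
  haveI : NeZero m := ⟨by omega⟩
  set f : Fin (m ^ k + 1) → (Fin k → ZMod m) :=
    fun i a => ((w.take i).count a : ZMod m) with hf
  have key : ∀ i j : Fin (m ^ k + 1), (i : ℕ) < j → f i = f j →
      ∃ w' : List (Fin k), w' ≠ [] ∧ w' <:+: w ∧ ∀ a : Fin k, m ∣ w'.count a := by
    intro i j h hfe
    refine ⟨(w.take j).drop i, ?_, ?_, ?_⟩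
    · have hj : (j : ℕ) ≤ w.length := le_trans (by omega) hw
      have hlen : ((w.take j).drop i).length = j - i := by
        simp [Nat.min_eq_left hj]
      intro hnil
      rw [hnil] at hlen
      simp at hlen
      omega
    · exact ((w.take j).drop_suffix i).isInfix.trans (w.take_prefix j).isInfix
    · intro a
      have hsplit : (w.take j).count a = (w.take i).count a + ((w.take j).drop i).count a := by
        conv_lhs => rw [← List.take_append_drop i (w.take j)]
        rw [List.count_append, List.take_take, Nat.min_eq_left h.le]
      have heq := congrFun hfe a
      simp only [hf] at heq
      have hz : (((w.take j).drop i).count a : ZMod m) = 0 := by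
        have h2 : ((w.take j).count a : ZMod m) = ((w.take i).count a : ZMod m) + (((w.take j).drop i).count a : ZMod m) := by
          rw [hsplit]; push_cast; ring
        rw [← heq] at h2
        exact (left_eq_add.mp h2)
      exact (ZMod.natCast_eq_zero_iff _ _).mp hz
  have hcard : Fintype.card (Fin k → ZMod m) < Fintype.card (Fin (m ^ k + 1)) := by
    simp [ZMod.card]
  obtain ⟨i, j, hij, hfe⟩ := Fintype.exists_ne_map_eq_of_card_lt f hcard
  rcases lt_or_gt_of_ne (fun h => hij (Fin.ext h) : (i : ℕ) ≠ j) with h | h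
  · exact key i j h hfe
  · exact key j i h hfe.symm
end

section
/- Let k ≥ 2 be an integer and let a_1, …, a_k be integers with a_i ≥ 3 for all i. Define a sequence of rationals (b_n)_{n ≥ 0} by b_0 = 1 and, for n ≥ 1, b_n = 3·b_{n−1} − Σ m^{i_1+⋯+i_k}·b_{n−(a_1 i_1+⋯+a_k i_k)}, where m = 3, the sum ranges over all k-tuples (i_1,…,i_k) of positive integers with a_1 i_1 + ⋯ + a_k i_k ≤ n, and b_j is interpreted as 0 for j < 0. Then b_n ≥ 2.94·b_{n−1} for all n ≥ 1, and consequently b_n ≥ 2.94^n for all n ≥ 0. -/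
/-- The coefficient sequence of the inverse power series grows at rate at least
`2.94`: with `m = 3` and every `a i ≥ 3`, the recursively defined sequence
satisfies `b n ≥ 2.94 · b (n-1)` and hence `b n ≥ 2.94 ^ n`. -/
theorem coeff_growth_3 (k : ℕ) (hk : 2 ≤ k) (a : Fin k → ℕ) (ha : ∀ i, 3 ≤ a i)
    (b : ℕ → ℚ) (hb0 : b 0 = 1)
    (hbn : ∀ n, 1 ≤ n → b n =
      3 * b (n - 1) -
        ∑ i ∈ (Fintype.piFinset fun _ : Fin k => Finset.Icc 1 n).filter
            (fun i => ∑ j, a j * i j ≤ n),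
          (3 : ℚ) ^ (∑ j, i j) * b (n - ∑ j, a j * i j)) :
    (∀ n, 1 ≤ n → 2.94 * b (n - 1) ≤ b n) ∧ ∀ n, (2.94 : ℚ) ^ n ≤ b n := by
  set q : ℚ := 3 / 2.94 ^ 3 with hqdef
  have hq0 : (0:ℚ) < q := by norm_num [hqdef]
  have hq1 : q < 1 := by norm_num [hqdef]
  -- geometric bound
  have hgeom : ∀ N : ℕ, ∑ i ∈ Finset.Icc 1 N, q ^ i ≤ q / (1 - q) := by
    intro N
    have hr : ∀ M : ℕ, ∑ i ∈ Finset.range M, q ^ i ≤ 1 / (1 - q) := by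
      intro M
      have h := geom_sum_mul q M
      have hqn : (0:ℚ) ≤ q ^ M := by positivity
      rw [le_div_iff₀ (by linarith : (0:ℚ) < 1 - q)]
      nlinarith [h, hqn]
    have hIcc : ∑ i ∈ Finset.Icc 1 N, q ^ i = q * ∑ i ∈ Finset.range N, q ^ i := by
      rw [show Finset.Icc 1 N = Finset.Ico 1 (N+1) by rfl, Finset.sum_Ico_eq_sum_range,
        Finset.mul_sum]
      simp only [Nat.add_sub_cancel]
      refine Finset.sum_congr rfl fun i _ => ?_
      rw [pow_add, pow_one]
    rw [hIcc, div_eq_mul_one_div q (1-q)]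
    exact mul_le_mul_of_nonneg_left (hr N) (le_of_lt hq0)
  have key : ∀ n, 0 < b n ∧ ∀ m, m ≤ n → b m * 2.94 ^ (n - m) ≤ b n := by
    intro n
    induction n using Nat.strong_induction_on with
    | _ n ih =>
      rcases Nat.eq_zero_or_pos n with rfl | hn
      · refine ⟨by rw [hb0]; norm_num, ?_⟩
        intro m hm
        interval_cases m
        simp [hb0]
      · have ihn := ih (n-1) (by omega)
        -- per-term bound then sum bound
        have hsum : ∑ i ∈ (Fintype.piFinset fun _ : Fin k => Finset.Icc 1 n).filter
            (fun i => ∑ j, a j * i j ≤ n),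
            (3 : ℚ) ^ (∑ j, i j) * b (n - ∑ j, a j * i j) ≤ 0.06 * b (n-1) := by
          have hterm : ∀ i ∈ (Fintype.piFinset fun _ : Fin k => Finset.Icc 1 n).filter
              (fun i => ∑ j, a j * i j ≤ n),
              (3 : ℚ) ^ (∑ j, i j) * b (n - ∑ j, a j * i j)
                ≤ 2.94 * b (n-1) * q ^ (∑ j, i j) := by
            intro i hi
            rw [Finset.mem_filter] at hi
            obtain ⟨hipi, hile⟩ := hi
            rw [Fintype.mem_piFinset] at hipi
            have hij : ∀ j, 1 ≤ i j := fun j => (Finset.mem_Icc.mp (hipi j)).1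
            set s := ∑ j, i j with hs
            set t := ∑ j, a j * i j with ht
            have hks : k ≤ s := by
              calc k = ∑ _j : Fin k, 1 := by simp
              _ ≤ s := Finset.sum_le_sum fun j _ => hij j
            have hts : 3 * s ≤ t := by
              rw [hs, ht, Finset.mul_sum]
              exact Finset.sum_le_sum fun j _ => Nat.mul_le_mul_right _ (ha j)
            have ht1 : 1 ≤ t := by omega
            have hbm := ihn.2 (n - t) (by omega)
            rw [show n - 1 - (n - t) = t - 1 by omega] at hbm
            have hbpos : 0 < b (n - t) := (ih (n - t) (by omega)).1
            -- 3^s = q^s * 2.94^(3s)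
            have h3s : (3:ℚ) ^ s = q ^ s * 2.94 ^ (3 * s) := by
              rw [hqdef, div_pow, ← pow_mul, div_mul_cancel₀]
              positivity
            have hpow : (2.94:ℚ) ^ (3 * s) ≤ 2.94 ^ t :=
              pow_le_pow_right₀ (by norm_num) hts
            have ht' : (2.94:ℚ) ^ t = 2.94 * 2.94 ^ (t - 1) := by
              conv_lhs => rw [← Nat.sub_add_cancel ht1]
              rw [pow_succ]
              ring
            calc (3:ℚ) ^ s * b (n - t) = q ^ s * (2.94 ^ (3*s) * b (n - t)) := by
                  rw [h3s]; ring
              _ ≤ q ^ s * (2.94 ^ t * b (n - t)) := by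
                  apply mul_le_mul_of_nonneg_left _ (by positivity)
                  exact mul_le_mul_of_nonneg_right hpow (le_of_lt hbpos)
              _ = q ^ s * (2.94 * (b (n - t) * 2.94 ^ (t-1))) := by rw [ht']; ring
              _ ≤ q ^ s * (2.94 * b (n-1)) := by
                  apply mul_le_mul_of_nonneg_left _ (by positivity)
                  exact mul_le_mul_of_nonneg_left hbm (by norm_num)
              _ = 2.94 * b (n-1) * q ^ s := by ring
          have h1 := Finset.sum_le_sum hterm
          have h2 : ∑ i ∈ (Fintype.piFinset fun _ : Fin k => Finset.Icc 1 n).filter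
                (fun i => ∑ j, a j * i j ≤ n), 2.94 * b (n-1) * q ^ (∑ j, i j)
              ≤ ∑ i ∈ Fintype.piFinset (fun _ : Fin k => Finset.Icc 1 n),
                2.94 * b (n-1) * q ^ (∑ j, i j) := by
            apply Finset.sum_le_sum_of_subset_of_nonneg (Finset.filter_subset _ _)
            intro i _ _
            have := ihn.1
            positivity
          have hfact : ∑ i ∈ Fintype.piFinset (fun _ : Fin k => Finset.Icc 1 n),
              q ^ (∑ j, i j) = (∑ i ∈ Finset.Icc 1 n, q ^ i) ^ k := by
            calc ∑ i ∈ Fintype.piFinset (fun _ : Fin k => Finset.Icc 1 n), q ^ (∑ j, i j)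
                = ∑ i ∈ Fintype.piFinset (fun _ : Fin k => Finset.Icc 1 n),
                  ∏ j, q ^ (i j) := by
                  refine Finset.sum_congr rfl fun i _ => ?_
                  rw [Finset.prod_pow_eq_pow_sum]
              _ = ∏ _j : Fin k, ∑ x ∈ Finset.Icc 1 n, q ^ x :=
                  (Finset.prod_univ_sum _ _).symm
              _ = (∑ i ∈ Finset.Icc 1 n, q ^ i) ^ k := by
                  rw [Finset.prod_const, Finset.card_univ, Fintype.card_fin]
          have hr2 : (∑ i ∈ Finset.Icc 1 n, q ^ i) ^ k ≤ (q / (1-q)) ^ 2 := by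
            have hnn : (0:ℚ) ≤ ∑ i ∈ Finset.Icc 1 n, q ^ i :=
              Finset.sum_nonneg fun i _ => by positivity
            calc (∑ i ∈ Finset.Icc 1 n, q ^ i) ^ k ≤ (q / (1-q)) ^ k :=
                  pow_le_pow_left₀ hnn (hgeom n) k
              _ ≤ (q / (1-q)) ^ 2 := by
                  apply pow_le_pow_of_le_one (by positivity) _ hk
                  rw [hqdef]; norm_num
          have hfinal : 2.94 * b (n-1) * (q / (1-q)) ^ 2 ≤ 0.06 * b (n-1) := by
            have h3 : 2.94 * (q / (1-q)) ^ 2 ≤ 0.06 := by rw [hqdef]; norm_num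
            nlinarith [ihn.1]
          calc ∑ i ∈ (Fintype.piFinset fun _ : Fin k => Finset.Icc 1 n).filter
                (fun i => ∑ j, a j * i j ≤ n),
                (3 : ℚ) ^ (∑ j, i j) * b (n - ∑ j, a j * i j)
              ≤ ∑ i ∈ Fintype.piFinset (fun _ : Fin k => Finset.Icc 1 n),
                2.94 * b (n-1) * q ^ (∑ j, i j) := le_trans h1 h2
            _ = 2.94 * b (n-1) * (∑ i ∈ Finset.Icc 1 n, q ^ i) ^ k := by
                rw [← Finset.mul_sum, hfact]
            _ ≤ 2.94 * b (n-1) * (q / (1-q)) ^ 2 := by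
                apply mul_le_mul_of_nonneg_left hr2
                have := ihn.1; positivity
            _ ≤ 0.06 * b (n-1) := hfinal
        have hstep : 2.94 * b (n-1) ≤ b n := by
          have heq := hbn n hn
          linarith [hsum]
        have hbpos : 0 < b n := lt_of_lt_of_le (by have := ihn.1; nlinarith) hstep
        refine ⟨hbpos, fun m hm => ?_⟩
        rcases eq_or_lt_of_le hm with rfl | hmn
        · simp
        · have hm' : m ≤ n - 1 := by omega
          have := ihn.2 m hm'
          calc b m * 2.94 ^ (n - m) = (b m * 2.94 ^ (n - 1 - m)) * 2.94 := by
                rw [show n - m = (n - 1 - m) + 1 by omega, pow_succ]; ring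
            _ ≤ b (n-1) * 2.94 := mul_le_mul_of_nonneg_right this (by norm_num)
            _ ≤ b n := by linarith
  constructor
  · intro n hn
    have h := (key n).2 (n-1) (by omega)
    rw [show n - (n-1) = 1 by omega, pow_one] at h
    linarith
  · intro n
    have h := (key n).2 0 (Nat.zero_le n)
    rw [hb0, Nat.sub_zero, one_mul] at h
    exact h
end

section
/- Let k ≥ 2 be an integer and let a_1, …, a_k be integers with a_i ≥ 4 for all i. Define a sequence of rationals (b_n)_{n ≥ 0} by b_0 = 1 and, for n ≥ 1, b_n = 2·b_{n−1} − Σ m^{i_1+⋯+i_k}·b_{n−(a_1 i_1+⋯+a_k i_k)}, where m = 2, the sum ranges over all k-tuples (i_1,…,i_k) of positive integers with a_1 i_1 + ⋯ + a_k i_k ≤ n, and b_j is interpreted as 0 for j < 0. Then b_n ≥ 1.94·b_{n−1} for all n ≥ 1, and consequently b_n ≥ 1.94^n for all n ≥ 0. -/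
private lemma geom_id (r : ℚ) : ∀ n : ℕ,
    (1 - r) * (∑ i ∈ Finset.Icc 1 n, r ^ i) = r - r ^ (n + 1)
  | 0 => by simp
  | (n + 1) => by
    rw [Finset.sum_Icc_succ_top (by omega : 1 ≤ n + 1), mul_add, geom_id r n]
    ring

/-- The coefficient sequence of the inverse power series grows at rate at least
`1.94`: with `m = 2` and every `a i ≥ 4`, the recursively defined sequence
satisfies `b n ≥ 1.94 · b (n-1)` and hence `b n ≥ 1.94 ^ n`. -/
theorem coeff_growth_2 (k : ℕ) (hk : 2 ≤ k) (a : Fin k → ℕ) (ha : ∀ i, 4 ≤ a i)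
    (b : ℕ → ℚ) (hb0 : b 0 = 1)
    (hbn : ∀ n, 1 ≤ n → b n =
      2 * b (n - 1) -
        ∑ i ∈ (Fintype.piFinset fun _ : Fin k => Finset.Icc 1 n).filter
            (fun i => ∑ j, a j * i j ≤ n),
          (2 : ℚ) ^ (∑ j, i j) * b (n - ∑ j, a j * i j)) :
    (∀ n, 1 ≤ n → 1.94 * b (n - 1) ≤ b n) ∧ ∀ n, (1.94 : ℚ) ^ n ≤ b n := by
  have hc : (0 : ℚ) ≤ 1.94 := by norm_num
  have hc1 : (1 : ℚ) ≤ 1.94 := by norm_num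
  set r : ℚ := 2 / 1.94 ^ 4 with hr
  have hrval : r = 12500000 / 88529281 := by rw [hr]; norm_num
  have hr0 : (0 : ℚ) ≤ r := by rw [hrval]; norm_num
  have hgeom : ∀ n : ℕ, (∑ i ∈ Finset.Icc 1 n, r ^ i) ≤ 0.17 := by
    intro n
    have h1 : (0 : ℚ) < 1 - r := by rw [hrval]; norm_num
    have h2 := geom_id r n
    have h3 : (1 - r) * (∑ i ∈ Finset.Icc 1 n, r ^ i) ≤ r := by
      linarith [pow_nonneg hr0 (n + 1)]
    have h4 : (∑ i ∈ Finset.Icc 1 n, r ^ i) ≤ r / (1 - r) := by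
      rw [le_div_iff₀ h1, mul_comm]; exact h3
    calc (∑ i ∈ Finset.Icc 1 n, r ^ i) ≤ r / (1 - r) := h4
      _ ≤ 0.17 := by rw [hrval]; norm_num
  have key : ∀ n : ℕ, (1.94 : ℚ) ^ n ≤ b n ∧ (1 ≤ n → 1.94 * b (n - 1) ≤ b n) := by
    intro n
    induction n using Nat.strong_induction_on with
    | _ n ih =>
      rcases Nat.eq_zero_or_pos n with h0 | hn
      · subst h0; simp [hb0]
      · have hbpos : ∀ j, j < n → (0 : ℚ) ≤ b j := fun j hj =>
          le_trans (pow_nonneg hc j) ((ih j hj).1)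
        have chain : ∀ s : ℕ, s + 1 ≤ n → (1.94 : ℚ) ^ s * b (n - 1 - s) ≤ b (n - 1) := by
          intro s
          induction s with
          | zero => intro _; simp
          | succ s ihs =>
            intro hs
            have h1 : 1 ≤ n - 1 - s := by omega
            have h2 : n - 1 - s < n := by omega
            have h3 := (ih _ h2).2 h1
            calc (1.94 : ℚ) ^ (s + 1) * b (n - 1 - (s + 1))
                = 1.94 ^ s * (1.94 * b (n - 1 - s - 1)) := by
                  rw [show n - 1 - (s + 1) = n - 1 - s - 1 from by omega]; ring
              _ ≤ 1.94 ^ s * b (n - 1 - s) :=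
                  mul_le_mul_of_nonneg_left h3 (pow_nonneg hc s)
              _ ≤ b (n - 1) := ihs (by omega)
        have hbn1 : (0 : ℚ) ≤ b (n - 1) := hbpos (n - 1) (by omega)
        have hstep : 1.94 * b (n - 1) ≤ b n := by
          rw [hbn n hn]
          have hsum : (∑ i ∈ (Fintype.piFinset fun _ : Fin k => Finset.Icc 1 n).filter
              (fun i => ∑ j, a j * i j ≤ n),
              (2 : ℚ) ^ (∑ j, i j) * b (n - ∑ j, a j * i j))
              ≤ 0.06 * b (n - 1) := by
            have termbd : ∀ i ∈ (Fintype.piFinset fun _ : Fin k => Finset.Icc 1 n).filter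
                (fun i => ∑ j, a j * i j ≤ n),
                (2 : ℚ) ^ (∑ j, i j) * b (n - ∑ j, a j * i j)
                  ≤ 1.94 * r ^ (∑ j, i j) * b (n - 1) := by
              intro i hi
              rw [Finset.mem_filter] at hi
              obtain ⟨hip, hsn⟩ := hi
              rw [Fintype.mem_piFinset] at hip
              have hi1 : ∀ j, 1 ≤ i j := fun j => (Finset.mem_Icc.mp (hip j)).1
              set t := ∑ j, i j with hts
              set s := ∑ j, a j * i j with hss
              have hkt : k ≤ t := by
                calc k = ∑ _j : Fin k, 1 := by simp
                  _ ≤ t := Finset.sum_le_sum fun j _ => hi1 j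
              have h4t : 4 * t ≤ s := by
                rw [hts, hss, Finset.mul_sum]
                exact Finset.sum_le_sum fun j _ =>
                  Nat.mul_le_mul_right (i j) (ha j)
              have hs1 : 1 ≤ s := by omega
              have hA : (1.94 : ℚ) ^ (s - 1) * b (n - s) ≤ b (n - 1) := by
                have := chain (s - 1) (by omega)
                rwa [show n - 1 - (s - 1) = n - s from by omega] at this
              have hbns : (0 : ℚ) ≤ b (n - s) := hbpos (n - s) (by omega)
              have hrt : r ^ t = 2 ^ t / 1.94 ^ (4 * t) := by
                rw [hr, div_pow, ← pow_mul]
              have h2t : (2 : ℚ) ^ t ≤ 1.94 ^ s * r ^ t := by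
                have hle : (1.94 : ℚ) ^ (4 * t) ≤ 1.94 ^ s := pow_le_pow_right₀ hc1 h4t
                have hpos : (0 : ℚ) < 1.94 ^ (4 * t) := by positivity
                calc (2 : ℚ) ^ t = 1.94 ^ (4 * t) * (2 ^ t / 1.94 ^ (4 * t)) := by
                      field_simp
                  _ ≤ 1.94 ^ s * (2 ^ t / 1.94 ^ (4 * t)) :=
                      mul_le_mul_of_nonneg_right hle (by positivity)
                  _ = 1.94 ^ s * r ^ t := by rw [hrt]
              calc (2 : ℚ) ^ t * b (n - s)
                  ≤ (1.94 ^ s * r ^ t) * b (n - s) :=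
                    mul_le_mul_of_nonneg_right h2t hbns
                _ = 1.94 * r ^ t * (1.94 ^ (s - 1) * b (n - s)) := by
                    have hpow : (1.94 : ℚ) ^ s = 1.94 * 1.94 ^ (s - 1) := by
                      conv_lhs => rw [show s = (s - 1) + 1 from by omega]
                      rw [pow_succ, mul_comm]
                    rw [hpow]; ring
                _ ≤ 1.94 * r ^ t * b (n - 1) := by
                    apply mul_le_mul_of_nonneg_left hA
                    positivity
            calc (∑ i ∈ (Fintype.piFinset fun _ : Fin k => Finset.Icc 1 n).filter
                (fun i => ∑ j, a j * i j ≤ n),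
                (2 : ℚ) ^ (∑ j, i j) * b (n - ∑ j, a j * i j))
                ≤ ∑ i ∈ (Fintype.piFinset fun _ : Fin k => Finset.Icc 1 n).filter
                    (fun i => ∑ j, a j * i j ≤ n),
                    1.94 * r ^ (∑ j, i j) * b (n - 1) := Finset.sum_le_sum termbd
              _ = 1.94 * b (n - 1) * ∑ i ∈ (Fintype.piFinset fun _ : Fin k =>
                    Finset.Icc 1 n).filter (fun i => ∑ j, a j * i j ≤ n),
                    r ^ (∑ j, i j) := by
                  rw [Finset.mul_sum]; exact Finset.sum_congr rfl fun i _ => by ring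
              _ ≤ 1.94 * b (n - 1) * ∑ i ∈ (Fintype.piFinset fun _ : Fin k =>
                    Finset.Icc 1 n), r ^ (∑ j, i j) := by
                  apply mul_le_mul_of_nonneg_left _ (by positivity)
                  exact Finset.sum_le_sum_of_subset_of_nonneg
                    (Finset.filter_subset _ _) (fun i _ _ => pow_nonneg hr0 _)
              _ = 1.94 * b (n - 1) * (∑ i ∈ Finset.Icc 1 n, r ^ i) ^ k := by
                  congr 1
                  have : ∀ x ∈ (Fintype.piFinset fun _ : Fin k => Finset.Icc 1 n),
                      r ^ (∑ j, x j) = ∏ j, r ^ x j := fun x _ =>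
                    (Finset.prod_pow_eq_pow_sum _ _ _).symm
                  rw [Finset.sum_congr rfl this, ← Finset.prod_univ_sum]
                  simp [Finset.prod_const]
              _ ≤ 1.94 * b (n - 1) * (0.17 : ℚ) ^ 2 := by
                  apply mul_le_mul_of_nonneg_left _ (by positivity)
                  have hg0 : (0 : ℚ) ≤ ∑ i ∈ Finset.Icc 1 n, r ^ i :=
                    Finset.sum_nonneg fun i _ => pow_nonneg hr0 i
                  calc (∑ i ∈ Finset.Icc 1 n, r ^ i) ^ k ≤ (0.17 : ℚ) ^ k :=
                        pow_le_pow_left₀ hg0 (hgeom n) k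
                    _ ≤ (0.17 : ℚ) ^ 2 :=
                        pow_le_pow_of_le_one (by norm_num) (by norm_num) hk
              _ ≤ 0.06 * b (n - 1) := by nlinarith
          linarith
        refine ⟨?_, fun _ => hstep⟩
        calc (1.94 : ℚ) ^ n = 1.94 * 1.94 ^ (n - 1) := by
              conv_lhs => rw [show n = (n - 1) + 1 from by omega]
              rw [pow_succ, mul_comm]
          _ ≤ 1.94 * b (n - 1) :=
              mul_le_mul_of_nonneg_left (ih (n - 1) (by omega)).1 hc
          _ ≤ b n := hstep
  exact ⟨fun n hn => (key n).2 hn, fun n => (key n).1⟩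
end

section
/- Let m ≥ 2 and μ ≥ 2 and k ≥ 2 be integers, let λ be a positive real with λ^μ > m, and let a_1, …, a_k be integers with a_i ≥ μ for all i. Let n ≥ 1 and let b_0, b_1, …, b_{n−1} be non-negative reals satisfying b_j ≥ λ·b_{j−1} for all 1 ≤ j ≤ n−1 (with b_j interpreted as 0 for j < 0). Then Σ m^{i_1+⋯+i_k}·b_{n−(a_1 i_1+⋯+a_k i_k)} ≤ λ·b_{n−1}·(m/(λ^μ − m))^k, where the sum ranges over all k-tuples (i_1,…,i_k) of positive integers with a_1 i_1 + ⋯ + a_k i_k ≤ n. -/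
/-- The key estimate in the inductive step of the growth lemma: if
`b j ≥ lam · b (j-1)` for `1 ≤ j ≤ n-1` and the `b j` are non-negative, then
`∑ m^(i₁+⋯+i_k) · b (n - (a₁i₁+⋯+a_k i_k)) ≤ lam · b (n-1) · (m/(lam^μ - m))^k`,
the sum over tuples of positive integers with `a₁i₁+⋯+a_k i_k ≤ n`; moreover the
bound with exponent `2` also holds when `m/(lam^μ - m) ≤ 1`. -/
theorem key_estimate (m μ k : ℕ) (hm : 2 ≤ m) (hμ : 2 ≤ μ) (hk : 2 ≤ k)
    (lam : ℝ) (hlam : 0 < lam) (hlamμ : (m : ℝ) < lam ^ μ)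
    (a : Fin k → ℕ) (ha : ∀ i, μ ≤ a i)
    (n : ℕ) (hn : 1 ≤ n) (b : ℕ → ℝ)
    (hbnonneg : ∀ j, j ≤ n - 1 → 0 ≤ b j)
    (hbgrow : ∀ j, 1 ≤ j → j ≤ n - 1 → lam * b (j - 1) ≤ b j) :
    (∑ i ∈ (Fintype.piFinset fun _ : Fin k => Finset.Icc 1 n).filter
          (fun i => ∑ j, a j * i j ≤ n),
        (m : ℝ) ^ (∑ j, i j) * b (n - ∑ j, a j * i j)) ≤
      lam * b (n - 1) * ((m : ℝ) / (lam ^ μ - m)) ^ k ∧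
    ((m : ℝ) / (lam ^ μ - m) ≤ 1 →
      (∑ i ∈ (Fintype.piFinset fun _ : Fin k => Finset.Icc 1 n).filter
            (fun i => ∑ j, a j * i j ≤ n),
          (m : ℝ) ^ (∑ j, i j) * b (n - ∑ j, a j * i j)) ≤
        lam * b (n - 1) * ((m : ℝ) / (lam ^ μ - m)) ^ 2) := by
  have hm2 : (2 : ℝ) ≤ (m : ℝ) := by exact_mod_cast hm
  have hlam1 : 1 < lam := by
    by_contra h
    push_neg at h
    have : lam ^ μ ≤ 1 := pow_le_one₀ hlam.le h
    linarith
  have hsub : 0 < lam ^ μ - (m : ℝ) := by linarith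
  set q : ℝ := (m : ℝ) / (lam ^ μ - m) with hq
  have hq0 : 0 ≤ q := div_nonneg (by linarith) hsub.le
  have hb1 : 0 ≤ b (n - 1) := hbnonneg _ le_rfl
  -- growth: lam ^ d * b j ≤ b (j + d)
  have grow : ∀ d j : ℕ, j + d ≤ n - 1 → lam ^ d * b j ≤ b (j + d) := by
    intro d
    induction d with
    | zero => intro j _; simp
    | succ d ih =>
      intro j hjd
      have h1 : lam ^ (d + 1) * b j = lam * (lam ^ d * b j) := by ring
      have h2 : lam ^ d * b j ≤ b (j + d) := ih j (by omega)
      calc lam ^ (d + 1) * b j = lam * (lam ^ d * b j) := h1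
        _ ≤ lam * b (j + d) := by
            exact mul_le_mul_of_nonneg_left h2 hlam.le
        _ ≤ b (j + d + 1) := by
            have := hbgrow (j + d + 1) (by omega) (by omega)
            simpa using this
  -- per-factor geometric sum bound
  have factor_le : ∀ j : Fin k, (∑ t ∈ Finset.Icc 1 n, ((m : ℝ) / lam ^ (a j)) ^ t) ≤ q := by
    intro j
    have hLμ : lam ^ μ ≤ lam ^ (a j) := pow_le_pow_right₀ hlam1.le (ha j)
    have hL0 : (0 : ℝ) < lam ^ (a j) := pow_pos hlam _
    set r : ℝ := (m : ℝ) / lam ^ (a j) with hr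
    have hr0 : 0 ≤ r := div_nonneg (by linarith) hL0.le
    have hr1 : r < 1 := (div_lt_one hL0).2 (lt_of_lt_of_le hlamμ hLμ)
    have hicc : Finset.Icc 1 n = Finset.Ico 1 (n + 1) := by
      ext t; simp [Nat.lt_succ_iff]
    calc (∑ t ∈ Finset.Icc 1 n, r ^ t) = ∑ t ∈ Finset.Ico 1 (n + 1), r ^ t := by rw [hicc]
      _ ≤ r ^ 1 / (1 - r) := geom_sum_Ico_le_of_lt_one hr0 hr1
      _ = (m : ℝ) / (lam ^ (a j) - m) := by
          have hLm : lam ^ (a j) - (m : ℝ) ≠ 0 := by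
            have := lt_of_lt_of_le hlamμ hLμ; linarith
          rw [pow_one, hr]
          field_simp
      _ ≤ q := by
          apply div_le_div_of_nonneg_left (by linarith) hsub
          linarith
  -- main bound
  have main : (∑ i ∈ (Fintype.piFinset fun _ : Fin k => Finset.Icc 1 n).filter
          (fun i => ∑ j, a j * i j ≤ n),
        (m : ℝ) ^ (∑ j, i j) * b (n - ∑ j, a j * i j)) ≤
      lam * b (n - 1) * q ^ k := by
    have h0k : 0 < k := by omega
    calc (∑ i ∈ (Fintype.piFinset fun _ : Fin k => Finset.Icc 1 n).filter
            (fun i => ∑ j, a j * i j ≤ n),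
          (m : ℝ) ^ (∑ j, i j) * b (n - ∑ j, a j * i j))
        ≤ ∑ i ∈ (Fintype.piFinset fun _ : Fin k => Finset.Icc 1 n).filter
            (fun i => ∑ j, a j * i j ≤ n),
          lam * b (n - 1) * ∏ j, ((m : ℝ) / lam ^ (a j)) ^ (i j) := by
          apply Finset.sum_le_sum
          intro i hi
          rw [Finset.mem_filter] at hi
          obtain ⟨hip, hsn⟩ := hi
          rw [Fintype.mem_piFinset] at hip
          set s := ∑ j, a j * i j with hs
          have hs1 : 1 ≤ s := by
            have j0 : Fin k := ⟨0, h0k⟩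
            have hi0 : 1 ≤ i j0 := (Finset.mem_Icc.1 (hip j0)).1
            have : a j0 * i j0 ≤ s :=
              Finset.single_le_sum (f := fun j => a j * i j) (fun _ _ => Nat.zero_le _)
                (Finset.mem_univ j0)
            have haj := ha j0
            have : 1 ≤ a j0 * i j0 := Nat.one_le_iff_ne_zero.2
              (Nat.mul_ne_zero (by omega) (by omega))
            omega
          have hgrow : lam ^ (s - 1) * b (n - s) ≤ b (n - 1) := by
            have := grow (s - 1) (n - s) (by omega)
            rwa [show n - s + (s - 1) = n - 1 by omega] at this
          have hbns : b (n - s) ≤ b (n - 1) / lam ^ (s - 1) := by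
            rw [le_div_iff₀ (pow_pos hlam _)]
            calc b (n - s) * lam ^ (s - 1) = lam ^ (s - 1) * b (n - s) := by ring
              _ ≤ b (n - 1) := hgrow
          have hprod : (∏ j, ((m : ℝ) / lam ^ (a j)) ^ (i j))
              = (m : ℝ) ^ (∑ j, i j) / lam ^ s := by
            rw [hs]
            simp only [div_pow, ← pow_mul]
            rw [Finset.prod_div_distrib, Finset.prod_pow_eq_pow_sum,
              Finset.prod_pow_eq_pow_sum]
          rw [hprod]
          have hmpow : (0 : ℝ) ≤ (m : ℝ) ^ (∑ j, i j) := by positivity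
          have key : lam * b (n - 1) * ((m : ℝ) ^ (∑ j, i j) / lam ^ s)
              = (m : ℝ) ^ (∑ j, i j) * (b (n - 1) / lam ^ (s - 1)) := by
            rw [show s = (s - 1) + 1 by omega, pow_succ]
            have hl : lam ^ (s - 1) ≠ 0 := by positivity
            field_simp
            ring
            rw [show 1 + (s - 1) - 1 = s - 1 by omega]
          rw [key]
          exact mul_le_mul_of_nonneg_left hbns hmpow
      _ ≤ ∑ i ∈ (Fintype.piFinset fun _ : Fin k => Finset.Icc 1 n),
          lam * b (n - 1) * ∏ j, ((m : ℝ) / lam ^ (a j)) ^ (i j) := by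
          apply Finset.sum_le_sum_of_subset_of_nonneg (Finset.filter_subset _ _)
          intro i _ _
          have : (0 : ℝ) ≤ ∏ j, ((m : ℝ) / lam ^ (a j)) ^ (i j) := by positivity
          positivity
      _ = lam * b (n - 1) * ∏ j, ∑ t ∈ Finset.Icc 1 n, ((m : ℝ) / lam ^ (a j)) ^ t := by
          rw [← Finset.mul_sum, Finset.prod_univ_sum]
      _ ≤ lam * b (n - 1) * q ^ k := by
          apply mul_le_mul_of_nonneg_left _ (by positivity)
          calc (∏ j, ∑ t ∈ Finset.Icc 1 n, ((m : ℝ) / lam ^ (a j)) ^ t)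
              ≤ ∏ _j : Fin k, q := by
                apply Finset.prod_le_prod
                · intro j _
                  apply Finset.sum_nonneg
                  intro t _
                  positivity
                · intro j _
                  exact factor_le j
            _ = q ^ k := by simp
  refine ⟨main, fun hq1 => main.trans ?_⟩
  apply mul_le_mul_of_nonneg_left _ (by positivity)
  exact pow_le_pow_of_le_one hq0 hq1 hk
end
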